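/- Let N, M be positive integers with 2M ≤ N, let U, D, U', D' ⊆ {1,…,M} satisfy U∪D = U'∪D', U∩D = U'∩D', 1 ∈ U∖D and 1 ∈ U'∖D', and let α, β ∈ {2,…,M}∖(U∪D). Write W̄ := {N+1−w : w∈W}, αU := U∪{α}, βD := D∪{β}. Then the following three quantities are unchanged when (U,D) is replaced by (U',D'): (i) Δ((U∖{1})∪D̄)·Δ(αU∪(βD)‾) / [Δ(U∪D̄)·Δ((αU∖{1})∪(βD)‾)]; (ii) Δ(αU∪D̄)·Δ((U∖{1})∪(βD)‾) / [Δ(U∪D̄)·Δ((αU∖{1})∪(βD)‾)]; (iii) Δ(U∪(βD)‾)·Δ((αU∖{1})∪D̄) / [Δ(U∪D̄)·Δ((αU∖{1})∪(βD)‾)]. (Here (βD)‾ = D̄∪{N+1−β} and all the sets occurring consist of distinct integers, so all the Δ's are nonzero.) -/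

import Mathlib

open Finset

namespace Shuf

/-- A unit triangle of the triangular lattice: `(a, b, o)` where `o = false` is the
up-pointing unit triangle with vertices `(a,b), (a+1,b), (a,b+1)` (in the lattice
coordinates whose embedding is `(a,b) ↦ (a + b/2, b·√3/2)`), and `o = true` is the
down-pointing unit triangle with vertices `(a+1,b), (a,b+1), (a+1,b+1)`. -/
abbrev Tri : Type := ℤ × ℤ × Bool

/-- Adjacency from an up-pointing triangle `s` to a down-pointing triangle `t`
(sharing a unit edge). -/
def adjUD (s t : Tri) : Prop :=
  s.2.2 = false ∧ t.2.2 = true ∧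
    ((t.1 = s.1 ∧ t.2.1 = s.2.1) ∨ (t.1 = s.1 - 1 ∧ t.2.1 = s.2.1) ∨
      (t.1 = s.1 ∧ t.2.1 = s.2.1 - 1))

/-- Two unit triangles share a unit edge (form a lozenge). -/
def adj (s t : Tri) : Prop := adjUD s t ∨ adjUD t s

/-- A lozenge tiling of the region `R` with barrier edges `Bar`, encoded as the
involution pairing each unit triangle of `R` with the one it is matched to. -/
def IsTiling (R : Set Tri) (Bar : Set (Tri × Tri)) (f : Tri → Tri) : Prop :=
  (∀ t, t ∉ R → f t = t) ∧
    ∀ t ∈ R, f t ∈ R ∧ adj t (f t) ∧ f (f t) = t ∧ (t, f t) ∉ Bar ∧ (f t, t) ∉ Bar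

/-- `M R Bar` : the number of lozenge tilings of the region `R` with barriers `Bar`. -/
noncomputable def M (R : Set Tri) (Bar : Set (Tri × Tri)) : ℕ :=
  Nat.card {f : Tri → Tri // IsTiling R Bar f}

/-- 180° rotation about the point `(c.1/2, c.2/2)` (lattice coordinates). -/
def rot (c : ℤ × ℤ) (t : Tri) : Tri := (c.1 - t.1 - 1, c.2 - t.2.1 - 1, !t.2.2)

/-- `Mc c R Bar` : the number of lozenge tilings of `R` invariant under the 180°
rotation about the point `(c.1/2, c.2/2)`. -/
noncomputable def Mc (c : ℤ × ℤ) (R : Set Tri) (Bar : Set (Tri × Tri)) : ℕ :=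
  Nat.card {f : Tri → Tri // IsTiling R Bar f ∧ ∀ t, f (rot c t) = rot c (f t)}

/-- The doubly-dented hexagon whose horizontal axis (at height `0`) runs from the
west vertex `(0,0)` to the east vertex `(L,0)`, whose upper half is a trapezoid of
height `hu` and whose lower half is a trapezoid of height `hd`; the up-pointing unit
triangle just above the axis at position `i` is removed for `i ∈ U`, and the
down-pointing one just below the axis at position `i` is removed for `i ∈ D`
(positions are labelled `1,…,L` from left to right). -/
def HRegion (L hu hd : ℤ) (U D : Set ℤ) : Set Tri :=
  {t | (t.2.2 = false ∧ 0 ≤ t.2.1 ∧ t.2.1 < hu ∧ 0 ≤ t.1 ∧ t.1 + t.2.1 ≤ L - 1 ∧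
          (t.2.1 = 0 → t.1 + 1 ∉ U)) ∨
       (t.2.2 = true ∧ 0 ≤ t.2.1 ∧ t.2.1 < hu ∧ 0 ≤ t.1 ∧ t.1 + t.2.1 ≤ L - 2) ∨
       (t.2.2 = false ∧ -hd ≤ t.2.1 ∧ t.2.1 ≤ -1 ∧ -t.2.1 ≤ t.1 ∧ t.1 ≤ L - 1) ∨
       (t.2.2 = true ∧ -hd ≤ t.2.1 ∧ t.2.1 ≤ -1 ∧ -t.2.1 - 1 ≤ t.1 ∧ t.1 ≤ L - 1 ∧
          (t.2.1 = -1 → t.1 + 1 ∉ D))}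

/-- The barrier edges along the axis at the positions of `B`: the barrier at
position `i` forbids the vertical lozenge formed by the up-triangle just above and
the down-triangle just below the `i`-th unit segment of the axis. -/
def HBar (B : Set ℤ) : Set (Tri × Tri) :=
  {e | ∃ i ∈ B, e = ((i - 1, 0, false), (i - 1, -1, true)) ∨
                 e = ((i - 1, -1, true), (i - 1, 0, false))}

/-- `MH x y U D B` : the number of lozenge tilings of the doubly-dented hexagon
`H_{x,y}(U; D; B)`. -/
noncomputable def MH (x y : ℕ) (U D B : Finset ℤ) : ℕ :=
  M (HRegion (x + y + (U ∪ D).card) (y + U.card) (y + D.card) ↑U ↑D) (HBar ↑B)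

/-- `mir N W = {N + 1 - w : w ∈ W}`, the reflection of an index set. -/
def mir (N : ℤ) (W : Finset ℤ) : Finset ℤ := W.image (fun w => N + 1 - w)

/-- `MCS x y U D B` : the number of lozenge tilings of the centrally symmetric
doubly-dented hexagon `CS_{x,y}(U; D; B) = H_{x,y}(U ∪ D̄; D ∪ Ū; B ∪ B̄)`,
where `N = x + y + 2|U ∪ D|` and `W̄ = {N+1-w : w ∈ W}`. -/
noncomputable def MCS (x y : ℕ) (U D B : Finset ℤ) : ℕ :=
  MH x y (U ∪ mir (x + y + 2 * (U ∪ D).card) D) (D ∪ mir (x + y + 2 * (U ∪ D).card) U)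
    (B ∪ mir (x + y + 2 * (U ∪ D).card) B)

/-- `McCS x y U D B` : the number of centrally symmetric lozenge tilings of
`CS_{x,y}(U; D; B)` (tilings invariant under the 180° rotation about the center
`(N/2, 0)` of the region, `N = x + y + 2|U ∪ D|`). -/
noncomputable def McCS (x y : ℕ) (U D B : Finset ℤ) : ℕ :=
  let N : ℤ := x + y + 2 * (U ∪ D).card
  let U' : Finset ℤ := U ∪ mir N D
  let D' : Finset ℤ := D ∪ mir N U
  Mc (N, 0)
    (HRegion (x + y + (U' ∪ D').card) (y + U'.card) (y + D'.card) ↑U' ↑D')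
    (HBar ↑(B ∪ mir N B))

/-- `Δprod S = ∏_{s < s' ∈ S} (s' - s)`. -/
def Δprod (S : Finset ℤ) : ℤ :=
  ∏ p ∈ (S ×ˢ S).filter (fun p => p.1 < p.2), (p.2 - p.1)

/-- MacMahon's box formula `PP(a,b,c)`. -/
def PP (a b c : ℕ) : ℚ :=
  ∏ i ∈ Icc 1 a, ∏ j ∈ Icc 1 b, ∏ k ∈ Icc 1 c,
    (((i : ℚ) + j + k - 1) / ((i : ℚ) + j + k - 2))

/-- The hyperfactorial `H(n) = 0!·1!⋯(n-1)!`. -/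
def hyperfac (n : ℕ) : ℕ := ∏ k ∈ range n, k.factorial

/-- The Pochhammer symbol `(q)_r = q(q+1)⋯(q+r-1)`. -/
def poch (q : ℚ) (r : ℕ) : ℚ := ∏ i ∈ range r, (q + i)

/-- The dented semihexagon `T_{a,b}(S)`: the trapezoid with north side `b`, slanted
sides `a` and base `a + b` lying above the horizontal axis (base from `(0,0)` to
`(a+b,0)`), with the up-pointing unit triangles at the positions of `S` removed
from its base. -/
def TRegion (a b : ℤ) (S : Set ℤ) : Set Tri :=
  {t | (t.2.2 = false ∧ 0 ≤ t.2.1 ∧ t.2.1 < a ∧ 0 ≤ t.1 ∧ t.1 + t.2.1 ≤ a + b - 1 ∧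
          (t.2.1 = 0 → t.1 + 1 ∉ S)) ∨
       (t.2.2 = true ∧ 0 ≤ t.2.1 ∧ t.2.1 < a ∧ 0 ≤ t.1 ∧ t.1 + t.2.1 ≤ a + b - 2)}

/-- `MT a b S` : the number of lozenge tilings of `T_{a,b}(S)`. -/
noncomputable def MT (a b : ℤ) (S : Finset ℤ) : ℕ := M (TRegion a b ↑S) ∅

/-- The trapezoid with base `L` (from `(0,0)` to `(L,0)`), height `h`. -/
def trapRegion (L h : ℤ) : Set Tri :=
  {t | (t.2.2 = false ∧ 0 ≤ t.2.1 ∧ t.2.1 < h ∧ 0 ≤ t.1 ∧ t.1 + t.2.1 ≤ L - 1) ∨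
       (t.2.2 = true ∧ 0 ≤ t.2.1 ∧ t.2.1 < h ∧ 0 ≤ t.1 ∧ t.1 + t.2.1 ≤ L - 2)}

/-- The unit triangles of the up-pointing triangle of side `s` whose base runs from
`(p,0)` to `(p+s,0)` (lying above the axis). -/
def upTriSet (p : ℤ) (s : ℕ) : Set Tri :=
  {t | t.2.2 = false ∧ 0 ≤ t.2.1 ∧ p ≤ t.1 ∧ t.1 + t.2.1 ≤ p + s - 1} ∪
  {t | t.2.2 = true ∧ 0 ≤ t.2.1 ∧ p ≤ t.1 ∧ t.1 + t.2.1 ≤ p + s - 2}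

/-- The unit triangles of the down-pointing triangle of side `s` whose top edge runs
from `(p,0)` to `(p+s,0)` (lying below the axis). -/
def downTriSet (p : ℤ) (s : ℕ) : Set Tri :=
  {t | t.2.2 = true ∧ -(s : ℤ) ≤ t.2.1 ∧ t.2.1 ≤ -1 ∧ p - t.2.1 - 1 ≤ t.1 ∧ t.1 ≤ p + s - 1} ∪
  {t | t.2.2 = false ∧ -(s : ℤ) ≤ t.2.1 ∧ t.2.1 ≤ -1 ∧ p - t.2.1 ≤ t.1 ∧ t.1 ≤ p + s - 1}

/-- A triangle of side `s` along the axis starting at `p`, up- or down-pointing. -/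
def triSet (p : ℤ) (s : ℕ) (up : Bool) : Set Tri :=
  if up then upTriSet p s else downTriSet p s

/-- The removed triangles, at the dents given by a run/gap sequence
`a₁ (run), a₂ (gap), a₃ (run), …` starting at `p`. -/
def seqRemoved : ℤ → List ℕ → Set Tri
  | _, [] => ∅
  | p, [s] => upTriSet p s
  | p, s :: g :: r => upTriSet p s ∪ seqRemoved (p + s + g) r

/-- `oSum [a₁,a₂,…] = a₁ + a₃ + a₅ + ⋯`. -/
def oSum : List ℕ → ℕ
  | [] => 0
  | [s] => s
  | s :: _ :: r => s + oSum r

/-- `sFun l = s(a₁,…,a_r)` : the number of lozenge tilings of the generalized dented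
semihexagon `S(a₁,…,a_r)` (trapezoid of base `a₁+⋯+a_r` and height `a₁+a₃+⋯`, with
up-pointing triangles of sides `a₁, a₃, …` removed from its base at mutual
distances `a₂, a₄, …`, the first one touching the west vertex). -/
noncomputable def sFun (l : List ℕ) : ℕ :=
  M (trapRegion l.sum (oSum l) \ seqRemoved 0 l) ∅

/-- A fern: a chain of lattice triangles of alternating orientations along the axis,
given by the list of side-lengths and the orientation of the first triangle. -/
structure Fern where
  lengths : List ℕ
  firstUp : Bool

/-- The total length of a fern. -/
def Fern.total (F : Fern) : ℕ := F.lengths.sum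

/-- Sum of the entries at even positions if the flag is `true` (resp. odd positions
if `false`). -/
def upLenAux : Bool → List ℕ → ℕ
  | _, [] => 0
  | true, s :: r => s + upLenAux false r
  | false, _ :: r => upLenAux true r

/-- The sum of side-lengths of the up-pointing triangles of a fern. -/
def Fern.up (F : Fern) : ℕ := upLenAux F.firstUp F.lengths

/-- The sum of side-lengths of the down-pointing triangles of a fern. -/
def Fern.down (F : Fern) : ℕ := upLenAux (!F.firstUp) F.lengths

/-- The image of a fern under 180° rotation. -/
def Fern.rot (F : Fern) : Fern :=
  ⟨F.lengths.reverse, if F.lengths.length % 2 = 1 then !F.firstUp else F.firstUp⟩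

/-- Concatenation of two ferns (the second continuing the alternation of the first). -/
def Fern.cat (F G : Fern) : Fern := ⟨F.lengths ++ G.lengths, F.firstUp⟩

/-- The unit triangles of a chain of triangles of alternating orientations starting
at `p` with the first orientation `o`. -/
def chainSet : ℤ → Bool → List ℕ → Set Tri
  | _, _, [] => ∅
  | p, o, s :: r => triSet p s o ∪ chainSet (p + s) (!o) r

/-- The unit triangles of the ferns `Fs` placed along the axis starting at `p` with
gaps `ds` between consecutive ferns. -/
def fernsSet : ℤ → List Fern → List ℕ → Set Tri
  | _, [], _ => ∅
  | p, F :: Fs, ds => chainSet p F.firstUp F.lengths ∪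
      fernsSet (p + F.total + ds.headI) Fs ds.tail

def totUp (Fs : List Fern) : ℕ := (Fs.map Fern.up).sum
def totDown (Fs : List Fern) : ℕ := (Fs.map Fern.down).sum

/-- The hexagon with ferns removed `R_{x,y}(F₁,…,F_k | d₁,…,d_{k-1})`. -/
def RRegion (x y : ℕ) (Fs : List Fern) (ds : List ℕ) : Set Tri :=
  HRegion (x + y + totUp Fs + totDown Fs) (y + totUp Fs) (y + totDown Fs) ∅ ∅ \
    fernsSet 0 Fs ds

/-- The number of lozenge tilings of `R_{x,y}(F₁,…,F_k | d₁,…,d_{k-1})`. -/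
noncomputable def MR (x y : ℕ) (Fs : List Fern) (ds : List ℕ) : ℕ :=
  M (RRegion x y Fs ds) ∅

/-- The number of centrally symmetric lozenge tilings of
`R_{x,y}(F₁,…,F_k | d₁,…,d_{k-1})` (for a centrally symmetric datum; the center of
the hexagon is the midpoint `(L/2, 0)` of its axis). -/
noncomputable def McR (x y : ℕ) (Fs : List Fern) (ds : List ℕ) : ℕ :=
  Mc ((x + y + totUp Fs + totDown Fs : ℤ), 0) (RRegion x y Fs ds) ∅

/-- The positions (labelled `1,2,…` from the left) of the removed up-pointing unit
triangles just above the axis, for a chain starting at `p` with first orientation `o`. -/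
noncomputable def upRunPos : ℤ → Bool → List ℕ → Finset ℤ
  | _, _, [] => ∅
  | p, true, s :: r => Finset.Icc (p + 1) (p + s) ∪ upRunPos (p + s) false r
  | p, false, s :: r => upRunPos (p + s) true r

/-- The positions of the removed up-pointing unit triangles along the axis for the
ferns `Fs` with gaps `ds`, starting at `p`. -/
noncomputable def upPosAll : ℤ → List Fern → List ℕ → Finset ℤ
  | _, [], _ => ∅
  | p, F :: Fs, ds => upRunPos p F.firstUp F.lengths ∪
      upPosAll (p + F.total + ds.headI) Fs ds.tail

/-- The positions of the removed down-pointing unit triangles along the axis. -/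
noncomputable def downPosAll (p : ℤ) (Fs : List Fern) (ds : List ℕ) : Finset ℤ :=
  upPosAll p (Fs.map (fun F => Fern.mk F.lengths (!F.firstUp))) ds

/-- The unit triangles removed in the generalized dented semihexagon determined by
the maximal runs of the position set `A`: a unit triangle is removed precisely when
the interval of base positions it lies over is contained in `A`. -/
def runRemoved (A : Finset ℤ) : Set Tri :=
  {t | ∀ i ∈ Finset.Icc (t.1 + 1) (t.1 + t.2.1 + (if t.2.2 then 2 else 1)), i ∈ A}

/-- `MS A` : the number of lozenge tilings of the generalized dented semihexagon
`S(e₁, e₂, …)` where `e₁, e₃, …` are the lengths of the maximal runs of `A` and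
`e₂, e₄, …` the gaps between consecutive runs (base `= max A`, height `= |A|`). -/
noncomputable def MS (A : Finset ℤ) : ℕ :=
  M (trapRegion (A.max.unbotD 0) A.card \ runRemoved A) ∅

/-- The fern list of `E_{x,y}(F₁,…,F_k | d₁,…,d_{k-1})`:
`F₁,…,F_{k-1}, F_k ∘ F̄_k, F̄_{k-1},…,F̄₁`. -/
def EFerns (Fs : List Fern) : List Fern :=
  Fs.dropLast ++ Fern.cat (Fs.getLastD ⟨[], true⟩) (Fern.rot (Fs.getLastD ⟨[], true⟩)) ::
    (Fs.dropLast.map Fern.rot).reverse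

/-- The gap list of `E_{x,y}` : `d₁,…,d_{k-1},d_{k-1},…,d₁`. -/
def Egaps (ds : List ℕ) : List ℕ := ds ++ ds.reverse

/-- The fern list of `E'_{x,y}(F₁,…,F_k | d₁,…,d_{k-1})` : `F₁,…,F_k,F̄_k,…,F̄₁`. -/
def E'Ferns (Fs : List Fern) : List Fern := Fs ++ (Fs.map Fern.rot).reverse

/-- The gap list of `E'_{x,y}` : `d₁,…,d_{k-1},1,d_{k-1},…,d₁`. -/
def E'gaps (ds : List ℕ) : List ℕ := ds ++ 1 :: ds.reverse

end Shuf


/-!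
Put `X = (U ∖ {1}) ∪ D̄` and `b = N + 1 - β`. Every set occurring in the three ratios is `X`
with some of the pairwise distinct points `1, α, b` adjoined (the bounds `U, D ⊆ [1, M]` and
`2M ≤ N` keep the small elements `U ∪ {α}` apart from the large ones `D̄ ∪ {b}`), and
adjoining a point `c ∉ S` multiplies `Δ(S)` by `∏_{s ∈ S} |c - s|`. In each ratio all these
products cancel, leaving `|1 - α| |1 - b|`, `|1 - α| / |α - b|` and `|1 - b| / |α - b|`,
which do not depend on `(U, D)` at all.
-/

namespace Shuf

lemma Δprod_eq_prod_prod (S : Finset ℤ) :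
    Δprod S = ∏ x ∈ S, ∏ y ∈ S, if x < y then y - x else 1 := by
  rw [Δprod, prod_filter, prod_product]

lemma Δprod_pos (S : Finset ℤ) : 0 < Δprod S :=
  prod_pos fun _ hp => sub_pos.2 (mem_filter.1 hp).2

lemma Δprod_insert {a : ℤ} {S : Finset ℤ} (ha : a ∉ S) :
    Δprod (insert a S) = Δprod S * ∏ s ∈ S, |a - s| := by
  have hpair : ∀ s ∈ S, ((if a < s then s - a else 1) * if s < a then a - s else 1) = |a - s| :=
    fun s hs => by
      rcases lt_or_gt_of_ne (ne_of_mem_of_not_mem hs ha).symm with h | h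
      · simp [h, h.not_gt, abs_of_neg (sub_neg.2 h)]
      · simp [h, h.not_gt, abs_of_pos (sub_pos.2 h)]
  simp only [Δprod_eq_prod_prod, prod_insert ha, lt_irrefl, if_false, one_mul,
    prod_mul_distrib, ← prod_congr rfl hpair]
  ring

lemma Δprod_insert_insert {a b : ℤ} {S : Finset ℤ} (haS : a ∉ S) (hbS : b ∉ S) (hab : a ≠ b) :
    Δprod (insert a (insert b S)) =
      Δprod S * (∏ s ∈ S, |a - s|) * (∏ s ∈ S, |b - s|) * |a - b| := by
  rw [Δprod_insert (by simp [hab, haS]), Δprod_insert hbS, prod_insert hbS]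
  ring

lemma Δprod_insert_ratios {X : Finset ℤ} {p a b : ℤ} (hpX : p ∉ X) (haX : a ∉ X) (hbX : b ∉ X)
    (hpa : p ≠ a) (hpb : p ≠ b) (hab : a ≠ b) :
    ((Δprod X * Δprod (insert b (insert p (insert a X))) : ℤ) : ℚ) /
        ((Δprod (insert p X) * Δprod (insert b (insert a X)) : ℤ) : ℚ) =
      ((|p - a| * |p - b| : ℤ) : ℚ) ∧
    ((Δprod (insert p (insert a X)) * Δprod (insert b X) : ℤ) : ℚ) /
        ((Δprod (insert p X) * Δprod (insert b (insert a X)) : ℤ) : ℚ) =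
      ((|p - a| : ℤ) : ℚ) / ((|a - b| : ℤ) : ℚ) ∧
    ((Δprod (insert b (insert p X)) * Δprod (insert a X) : ℤ) : ℚ) /
        ((Δprod (insert p X) * Δprod (insert b (insert a X)) : ℤ) : ℚ) =
      ((|p - b| : ℤ) : ℚ) / ((|a - b| : ℤ) : ℚ) := by
  have hP : ∀ c ∉ X, ((∏ s ∈ X, |c - s| : ℤ) : ℚ) ≠ 0 := fun c hc =>
    Int.cast_ne_zero.2 <| prod_ne_zero_iff.2 fun s hs =>
      abs_ne_zero.2 (sub_ne_zero.2 fun h => hc (h ▸ hs))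
  have hΔ : (Δprod X : ℚ) ≠ 0 := Int.cast_ne_zero.2 (Δprod_pos X).ne'
  have hpa' : ((|p - a| : ℤ) : ℚ) ≠ 0 := by simpa [sub_eq_zero] using hpa
  have hpb' : ((|p - b| : ℤ) : ℚ) ≠ 0 := by simpa [sub_eq_zero] using hpb
  have hab' : ((|a - b| : ℤ) : ℚ) ≠ 0 := by simpa [sub_eq_zero] using hab
  rw [Δprod_insert (by simp [hpb.symm, hab.symm, hbX]), prod_insert (by simp [hpa, hpX]),
    prod_insert haX,
    Δprod_insert_insert hpX haX hpa, Δprod_insert_insert hbX haX hab.symm,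
    Δprod_insert_insert hbX hpX hpb.symm, Δprod_insert hpX, Δprod_insert haX, Δprod_insert hbX,
    abs_sub_comm b p, abs_sub_comm b a]
  have hPp := hP p hpX
  have hPa := hP a haX
  have hPb := hP b hbX
  simp only [Int.cast_mul]
  refine ⟨?_, ?_, ?_⟩ <;> field_simp

lemma mem_mir {N x : ℤ} {W : Finset ℤ} : x ∈ mir N W ↔ N + 1 - x ∈ W := by
  simp only [mir, mem_image]
  exact ⟨fun ⟨w, hw, h⟩ => by rwa [← h, sub_sub_cancel], fun h => ⟨_, h, sub_sub_cancel _ _⟩⟩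

lemma mir_insert (N w : ℤ) (W : Finset ℤ) : mir N (insert w W) = insert (N + 1 - w) (mir N W) :=
  image_insert _ _ _

lemma Δprod_ratios_eq {N M : ℕ} (hNM : 2 * M ≤ N) {U D : Finset ℤ}
    (hU : U ⊆ Icc 1 (M : ℤ)) (hD : D ⊆ Icc 1 (M : ℤ)) (h1U : 1 ∈ U) {α β : ℤ}
    (hα : α ∈ Icc (2 : ℤ) (M : ℤ) \ (U ∪ D)) (hβ : β ∈ Icc (2 : ℤ) (M : ℤ) \ (U ∪ D)) :
    ((Δprod ((U \ {1}) ∪ mir N D) * Δprod (insert α U ∪ mir N (insert β D)) : ℤ) : ℚ) /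
        ((Δprod (U ∪ mir N D) * Δprod ((insert α U \ {1}) ∪ mir N (insert β D)) : ℤ) : ℚ) =
      ((|1 - α| * |1 - (N + 1 - β)| : ℤ) : ℚ) ∧
    ((Δprod (insert α U ∪ mir N D) * Δprod ((U \ {1}) ∪ mir N (insert β D)) : ℤ) : ℚ) /
        ((Δprod (U ∪ mir N D) * Δprod ((insert α U \ {1}) ∪ mir N (insert β D)) : ℤ) : ℚ) =
      ((|1 - α| : ℤ) : ℚ) / ((|α - (N + 1 - β)| : ℤ) : ℚ) ∧
    ((Δprod (U ∪ mir N (insert β D)) * Δprod ((insert α U \ {1}) ∪ mir N D) : ℤ) : ℚ) /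
        ((Δprod (U ∪ mir N D) * Δprod ((insert α U \ {1}) ∪ mir N (insert β D)) : ℤ) : ℚ) =
      ((|1 - (N + 1 - β)| : ℤ) : ℚ) / ((|α - (N + 1 - β)| : ℤ) : ℚ) := by
  simp only [mem_sdiff, mem_Icc, mem_union, not_or] at hα hβ
  have hNM' : 2 * (M : ℤ) ≤ N := by exact_mod_cast hNM
  rw [sdiff_singleton_eq_erase, sdiff_singleton_eq_erase, erase_insert_of_ne (by omega)]
  obtain ⟨A, h1A, rfl⟩ : ∃ A, 1 ∉ A ∧ insert 1 A = U :=
    ⟨U.erase 1, notMem_erase 1 U, insert_erase h1U⟩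
  rw [erase_insert h1A]
  simp only [mir_insert, insert_union, union_insert]
  rw [insert_comm α 1]
  have hAM : ∀ x ∈ A, x ≤ M := fun x hx => (mem_Icc.1 (hU (mem_insert_of_mem hx))).2
  have hDbar : ∀ x ∈ mir N D, N + 1 - M ≤ x := fun x hx => by
    have := mem_Icc.1 (hD (mem_mir.1 hx)); omega
  refine Δprod_insert_ratios ?_ ?_ ?_ ?_ ?_ ?_ <;> try omega
  all_goals rw [mem_union, not_or]
  · exact ⟨h1A, fun h => by have := hDbar _ h; omega⟩
  · exact ⟨fun h => hα.2.1 (mem_insert_of_mem h), fun h => by have := hDbar _ h; omega⟩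
  · exact ⟨fun h => by have := hAM _ h; omega, fun h => hβ.2.2 (by simpa using mem_mir.1 h)⟩

theorem stmt9_general (N M : ℕ) (hNM : 2 * M ≤ N)
    (U D U' D' : Finset ℤ)
    (hU : U ⊆ Icc 1 (M : ℤ)) (hD : D ⊆ Icc 1 (M : ℤ))
    (hU' : U' ⊆ Icc 1 (M : ℤ)) (hD' : D' ⊆ Icc 1 (M : ℤ))
    (hUD : U ∪ D = U' ∪ D')
    (h1U : 1 ∈ U) (h1U' : 1 ∈ U')
    (α β : ℤ) (hα : α ∈ Icc (2 : ℤ) (M : ℤ) \ (U ∪ D)) (hβ : β ∈ Icc (2 : ℤ) (M : ℤ) \ (U ∪ D)) :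
    ((Δprod ((U \ {1}) ∪ mir N D) * Δprod (insert α U ∪ mir N (insert β D)) : ℤ) : ℚ) /
        ((Δprod (U ∪ mir N D) * Δprod ((insert α U \ {1}) ∪ mir N (insert β D)) : ℤ) : ℚ) =
      ((Δprod ((U' \ {1}) ∪ mir N D') * Δprod (insert α U' ∪ mir N (insert β D')) : ℤ) : ℚ) /
        ((Δprod (U' ∪ mir N D') * Δprod ((insert α U' \ {1}) ∪ mir N (insert β D')) : ℤ) : ℚ) ∧
    ((Δprod (insert α U ∪ mir N D) * Δprod ((U \ {1}) ∪ mir N (insert β D)) : ℤ) : ℚ) /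
        ((Δprod (U ∪ mir N D) * Δprod ((insert α U \ {1}) ∪ mir N (insert β D)) : ℤ) : ℚ) =
      ((Δprod (insert α U' ∪ mir N D') * Δprod ((U' \ {1}) ∪ mir N (insert β D')) : ℤ) : ℚ) /
        ((Δprod (U' ∪ mir N D') * Δprod ((insert α U' \ {1}) ∪ mir N (insert β D')) : ℤ) : ℚ) ∧
    ((Δprod (U ∪ mir N (insert β D)) * Δprod ((insert α U \ {1}) ∪ mir N D) : ℤ) : ℚ) /
        ((Δprod (U ∪ mir N D) * Δprod ((insert α U \ {1}) ∪ mir N (insert β D)) : ℤ) : ℚ) =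
      ((Δprod (U' ∪ mir N (insert β D')) * Δprod ((insert α U' \ {1}) ∪ mir N D') : ℤ) : ℚ) /
        ((Δprod (U' ∪ mir N D') * Δprod ((insert α U' \ {1}) ∪ mir N (insert β D')) : ℤ) : ℚ) := by
  obtain ⟨h₁, h₂, h₃⟩ := Δprod_ratios_eq hNM hU hD h1U hα hβ
  obtain ⟨h₁', h₂', h₃'⟩ := Δprod_ratios_eq hNM hU' hD' h1U' (hUD ▸ hα) (hUD ▸ hβ)
  exact ⟨h₁.trans h₁'.symm, h₂.trans h₂'.symm, h₃.trans h₃'.symm⟩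

/-- Claim 1: the three Δ-ratios in the case `1 ∈ U∖D`. -/
theorem stmt9 (N M : ℕ) (hN : 0 < N) (hM : 0 < M) (hNM : 2 * M ≤ N)
    (U D U' D' : Finset ℤ)
    (hU : U ⊆ Icc 1 (M : ℤ)) (hD : D ⊆ Icc 1 (M : ℤ))
    (hU' : U' ⊆ Icc 1 (M : ℤ)) (hD' : D' ⊆ Icc 1 (M : ℤ))
    (hUD : U ∪ D = U' ∪ D') (hI : U ∩ D = U' ∩ D')
    (h1U : 1 ∈ U) (h1D : 1 ∉ D) (h1U' : 1 ∈ U') (h1D' : 1 ∉ D')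
    (α β : ℤ) (hα : α ∈ Icc (2 : ℤ) (M : ℤ) \ (U ∪ D)) (hβ : β ∈ Icc (2 : ℤ) (M : ℤ) \ (U ∪ D)) :
    ((Δprod ((U \ {1}) ∪ mir N D) * Δprod (insert α U ∪ mir N (insert β D)) : ℤ) : ℚ) /
        ((Δprod (U ∪ mir N D) * Δprod ((insert α U \ {1}) ∪ mir N (insert β D)) : ℤ) : ℚ) =
      ((Δprod ((U' \ {1}) ∪ mir N D') * Δprod (insert α U' ∪ mir N (insert β D')) : ℤ) : ℚ) /
        ((Δprod (U' ∪ mir N D') * Δprod ((insert α U' \ {1}) ∪ mir N (insert β D')) : ℤ) : ℚ) ∧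
    ((Δprod (insert α U ∪ mir N D) * Δprod ((U \ {1}) ∪ mir N (insert β D)) : ℤ) : ℚ) /
        ((Δprod (U ∪ mir N D) * Δprod ((insert α U \ {1}) ∪ mir N (insert β D)) : ℤ) : ℚ) =
      ((Δprod (insert α U' ∪ mir N D') * Δprod ((U' \ {1}) ∪ mir N (insert β D')) : ℤ) : ℚ) /
        ((Δprod (U' ∪ mir N D') * Δprod ((insert α U' \ {1}) ∪ mir N (insert β D')) : ℤ) : ℚ) ∧
    ((Δprod (U ∪ mir N (insert β D)) * Δprod ((insert α U \ {1}) ∪ mir N D) : ℤ) : ℚ) /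
        ((Δprod (U ∪ mir N D) * Δprod ((insert α U \ {1}) ∪ mir N (insert β D)) : ℤ) : ℚ) =
      ((Δprod (U' ∪ mir N (insert β D')) * Δprod ((insert α U' \ {1}) ∪ mir N D') : ℤ) : ℚ) /
        ((Δprod (U' ∪ mir N D') * Δprod ((insert α U' \ {1}) ∪ mir N (insert β D')) : ℤ) : ℚ) :=
  stmt9_general N M hNM U D U' D' hU hD hU' hD' hUD h1U h1U' α β hα hβ

end Shuf
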